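/- arXiv:1901.06096 — 2 statements merged into one kernel-verified Lean document; each statement's English description precedes it below -/
import Mathlib

section
/- Let d ≥ 2, p ∈ (0, 2], and suppose there exist M = d(d+1)/2 unit vectors φ_1, …, φ_M in ℝ^d with ⟨φ_i, φ_j⟩² = 1/(d+2) for all i ≠ j (a maximal equiangular tight frame). Then for every Borel probability measure μ on the unit sphere S^{d−1} ⊂ ℝ^d, ∫∫ |⟨x, y⟩² − 1/(d+2)|^p dμ(x) dμ(y) ≥ (2/(d(d+1))) · ((d+1)/(d+2))^p, and equality holds when μ is the uniform (counting) probability measure on {φ_1, …, φ_M}. In particular, the uniform distribution over the points of a maximal equiangular tight frame minimizes the energy I_{α,p} with α² = 1/(d+2). -/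
open RealInnerProductSpace MeasureTheory
open scoped ENNReal

/-!
For `p ≤ 2` and `|t| ≤ 1 - α` one has `|t| ^ p ≥ (1 - α) ^ (p - 2) t²`, so it suffices to bound
the energy for `p = 2`. As `α ≤ 1/d`, some `β` solves `d β² - 2 β + α = 0`, and then on the sphere
`⟪x, y⟫² - α = ⟪Y x, Y y⟫` for `Y x = x xᵀ - β I`. Hence `(⟪x, y⟫² - α)² = ⟪W x, W y⟫` with
`W x = Y x ⊗ Y x`, and the `p = 2` energy of `μ` is `‖∫ W dμ‖²`. The components of `W x` along the
orthogonal vectors `P` (the projection onto symmetric traceless matrices) and `I ⊗ I` do not depend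
on `x`, so Bessel's inequality bounds `‖∫ W dμ‖²` from below by a constant. For the maximal ETF all
off-diagonal terms of the energy vanish and the bound is attained.
-/

section Tensors

variable {ι : Type*}

noncomputable def outer (v : EuclideanSpace ℝ ι) : EuclideanSpace ℝ (ι × ι) :=
  WithLp.toLp 2 fun a => v a.1 * v a.2

lemma outer_apply (v : EuclideanSpace ℝ ι) (a : ι × ι) : outer v a = v a.1 * v a.2 := rfl

@[fun_prop]
theorem continuous_outer : Continuous (outer : EuclideanSpace ℝ ι → _) :=
  (PiLp.continuous_toLp 2 _).comp <| continuous_pi fun a =>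
    (continuous_apply a.1 |>.comp (PiLp.continuous_ofLp 2 _)).mul
      (continuous_apply a.2 |>.comp (PiLp.continuous_ofLp 2 _))

variable [Fintype ι]

theorem inner_outer (u v : EuclideanSpace ℝ ι) : ⟪outer u, outer v⟫ = ⟪u, v⟫ ^ 2 := by
  simp only [PiLp.inner_apply, outer_apply, RCLike.inner_apply, conj_trivial, sq,
    Fintype.sum_prod_type, Finset.sum_mul_sum]
  exact Finset.sum_congr rfl fun i _ => Finset.sum_congr rfl fun j _ => by ring

theorem norm_outer_sq (v : EuclideanSpace ℝ ι) : ‖outer v‖ ^ 2 = (‖v‖ ^ 2) ^ 2 := by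
  rw [← real_inner_self_eq_norm_sq, ← real_inner_self_eq_norm_sq, inner_outer]

variable [DecidableEq ι]

variable (ι) in
noncomputable def idVec : EuclideanSpace ℝ (ι × ι) :=
  WithLp.toLp 2 fun a => if a.1 = a.2 then 1 else 0

omit [Fintype ι] in
lemma idVec_apply (a : ι × ι) : idVec ι a = if a.1 = a.2 then 1 else 0 := rfl

omit [Fintype ι] in
lemma idVec_swap (a : ι × ι) : idVec ι a.swap = idVec ι a := by
  simp [idVec_apply, eq_comm]

theorem inner_outer_idVec (v : EuclideanSpace ℝ ι) : ⟪outer v, idVec ι⟫ = ‖v‖ ^ 2 := by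
  rw [EuclideanSpace.real_norm_sq_eq]
  simp only [PiLp.inner_apply, outer_apply, idVec_apply, RCLike.inner_apply, conj_trivial,
    Fintype.sum_prod_type, ite_mul, one_mul, zero_mul, Finset.sum_ite_eq, Finset.mem_univ,
    if_true, sq]

theorem norm_idVec_sq : ‖idVec ι‖ ^ 2 = Fintype.card ι := by
  rw [EuclideanSpace.real_norm_sq_eq]
  simp only [idVec_apply, Fintype.sum_prod_type, ite_pow, one_pow, zero_pow two_ne_zero,
    Finset.sum_ite_eq, Finset.mem_univ, if_true, Finset.sum_const, Finset.card_univ,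
    nsmul_eq_mul, mul_one]

variable (ι) in
noncomputable def transposeVec : EuclideanSpace ℝ ((ι × ι) × (ι × ι)) :=
  WithLp.toLp 2 fun a => if a.2 = a.1.swap then 1 else 0

omit [Fintype ι] in
lemma transposeVec_apply (a : (ι × ι) × (ι × ι)) :
    transposeVec ι a = if a.2 = a.1.swap then 1 else 0 := rfl

theorem inner_outer_transposeVec {z : EuclideanSpace ℝ (ι × ι)} (hz : ∀ a, z a.swap = z a) :
    ⟪outer z, transposeVec ι⟫ = ‖z‖ ^ 2 := by
  rw [EuclideanSpace.real_norm_sq_eq]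
  simp only [PiLp.inner_apply, outer_apply, transposeVec_apply, RCLike.inner_apply, conj_trivial,
    Fintype.sum_prod_type (f := fun a : (ι × ι) × (ι × ι) => _), ite_mul, one_mul, zero_mul,
    Finset.sum_ite_eq', Finset.mem_univ, if_true, hz, sq]

theorem norm_transposeVec_sq : ‖transposeVec ι‖ ^ 2 = (Fintype.card ι : ℝ) ^ 2 := by
  rw [EuclideanSpace.real_norm_sq_eq]
  simp only [transposeVec_apply, Fintype.sum_prod_type (f := fun a : (ι × ι) × (ι × ι) => _),
    ite_pow, one_pow, zero_pow two_ne_zero, Finset.sum_ite_eq', Finset.mem_univ, if_true,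
    Finset.sum_const, Finset.card_univ, nsmul_eq_mul, mul_one, Fintype.card_prod]
  push_cast
  ring

theorem inner_idVec_transposeVec : ⟪idVec (ι × ι), transposeVec ι⟫ = Fintype.card ι := by
  simp only [PiLp.inner_apply, idVec_apply, transposeVec_apply, RCLike.inner_apply, conj_trivial,
    Fintype.sum_prod_type (f := fun a : (ι × ι) × (ι × ι) => _), ite_mul, one_mul, zero_mul,
    Finset.sum_ite_eq', Finset.mem_univ, if_true]
  rw [Fintype.sum_prod_type]
  simp [Prod.ext_iff, eq_comm]

variable (ι) in
/-- The orthogonal projection of `ι × ι` matrices onto the symmetric traceless ones,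
`(id + transpose) / 2 - I ⊗ I / n`, as a vector indexed by pairs of matrix entries. -/
noncomputable def symTracelessProj : EuclideanSpace ℝ ((ι × ι) × (ι × ι)) :=
  (2 : ℝ)⁻¹ • (idVec (ι × ι) + transposeVec ι) - (Fintype.card ι : ℝ)⁻¹ • outer (idVec ι)

theorem inner_outer_symTracelessProj {z : EuclideanSpace ℝ (ι × ι)} (hz : ∀ a, z a.swap = z a) :
    ⟪outer z, symTracelessProj ι⟫ = ‖z‖ ^ 2 - ⟪z, idVec ι⟫ ^ 2 / Fintype.card ι := by
  simp only [symTracelessProj, inner_sub_right, inner_smul_right, inner_add_right,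
    inner_outer_idVec, inner_outer_transposeVec hz, inner_outer]
  ring

theorem inner_outer_idVec_symTracelessProj [Nonempty ι] :
    ⟪outer (idVec ι), symTracelessProj ι⟫ = 0 := by
  rw [inner_outer_symTracelessProj idVec_swap, real_inner_self_eq_norm_sq, norm_idVec_sq]
  field_simp
  ring

theorem norm_symTracelessProj_sq [Nonempty ι] :
    ‖symTracelessProj ι‖ ^ 2 = ((Fintype.card ι : ℝ) ^ 2 + Fintype.card ι) / 2 - 1 := by
  have hn : (Fintype.card ι : ℝ) ≠ 0 := by simp
  have hid : ⟪idVec (ι × ι), symTracelessProj ι⟫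
      = ((Fintype.card ι : ℝ) ^ 2 + Fintype.card ι) / 2 - 1 := by
    simp only [symTracelessProj, inner_sub_right, real_inner_smul_right, inner_add_right,
      real_inner_self_eq_norm_sq, norm_idVec_sq, inner_idVec_transposeVec,
      real_inner_comm (outer (idVec ι)), inner_outer_idVec, Fintype.card_prod, Nat.cast_mul]
    field_simp
  have htr : ⟪transposeVec ι, symTracelessProj ι⟫
      = ((Fintype.card ι : ℝ) ^ 2 + Fintype.card ι) / 2 - 1 := by
    simp only [symTracelessProj, inner_sub_right, real_inner_smul_right, inner_add_right,
      real_inner_self_eq_norm_sq, norm_transposeVec_sq, real_inner_comm (idVec (ι × ι)),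
      inner_idVec_transposeVec, real_inner_comm (outer (idVec ι)),
      inner_outer_transposeVec idVec_swap, norm_idVec_sq]
    field_simp
    ring
  rw [← real_inner_self_eq_norm_sq]
  nth_rw 1 [symTracelessProj]
  rw [inner_sub_left, real_inner_smul_left, real_inner_smul_left, inner_add_left, hid, htr,
    inner_outer_idVec_symTracelessProj]
  ring

noncomputable def shiftedOuter (β : ℝ) (v : EuclideanSpace ℝ ι) : EuclideanSpace ℝ (ι × ι) :=
  outer v - β • idVec ι

omit [Fintype ι] in
theorem shiftedOuter_swap (β : ℝ) (v : EuclideanSpace ℝ ι) (a : ι × ι) :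
    shiftedOuter β v a.swap = shiftedOuter β v a := by
  simp [shiftedOuter, outer_apply, idVec_apply, eq_comm, mul_comm]

theorem inner_shiftedOuter_idVec (β : ℝ) (v : EuclideanSpace ℝ ι) :
    ⟪shiftedOuter β v, idVec ι⟫ = ‖v‖ ^ 2 - β * Fintype.card ι := by
  rw [shiftedOuter, inner_sub_left, real_inner_smul_left, inner_outer_idVec,
    real_inner_self_eq_norm_sq, norm_idVec_sq]

theorem inner_shiftedOuter (β : ℝ) (u v : EuclideanSpace ℝ ι) :
    ⟪shiftedOuter β u, shiftedOuter β v⟫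
      = ⟪u, v⟫ ^ 2 - β * (‖u‖ ^ 2 + ‖v‖ ^ 2) + β ^ 2 * Fintype.card ι := by
  simp only [shiftedOuter, inner_sub_left, inner_sub_right, real_inner_smul_left,
    real_inner_smul_right, inner_outer, inner_outer_idVec, real_inner_comm (outer v) (idVec ι),
    real_inner_self_eq_norm_sq, norm_smul, mul_pow, Real.norm_eq_abs, sq_abs, norm_idVec_sq]
  ring

theorem inner_outer_shiftedOuter_symTracelessProj [Nonempty ι] (β : ℝ)
    (v : EuclideanSpace ℝ ι) :
    ⟪outer (shiftedOuter β v), symTracelessProj ι⟫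
      = (‖v‖ ^ 2) ^ 2 * (1 - (Fintype.card ι : ℝ)⁻¹) := by
  have hn : (Fintype.card ι : ℝ) ≠ 0 := by simp
  rw [inner_outer_symTracelessProj (shiftedOuter_swap β v), ← real_inner_self_eq_norm_sq,
    inner_shiftedOuter, inner_shiftedOuter_idVec, real_inner_self_eq_norm_sq]
  field_simp
  ring

theorem inner_outer_shiftedOuter_of_norm_eq_one {α β : ℝ}
    (hβ : Fintype.card ι * β ^ 2 - 2 * β + α = 0) {u v : EuclideanSpace ℝ ι} (hu : ‖u‖ = 1)
    (hv : ‖v‖ = 1) :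
    ⟪outer (shiftedOuter β u), outer (shiftedOuter β v)⟫ = (⟪u, v⟫ ^ 2 - α) ^ 2 := by
  rw [inner_outer, inner_shiftedOuter, hu, hv]
  linear_combination (2 * (⟪u, v⟫ ^ 2 - α) + Fintype.card ι * β ^ 2 - 2 * β + α) * hβ

theorem inner_outer_idVec_outer_shiftedOuter {α β : ℝ}
    (hβ : Fintype.card ι * β ^ 2 - 2 * β + α = 0) {v : EuclideanSpace ℝ ι} (hv : ‖v‖ = 1) :
    ⟪outer (idVec ι), outer (shiftedOuter β v)⟫ = 1 - Fintype.card ι * α := by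
  rw [inner_outer, real_inner_comm, inner_shiftedOuter_idVec, hv]
  linear_combination Fintype.card ι * hβ

end Tensors

section InnerProductSpace

variable {E : Type*} [NormedAddCommGroup E] [InnerProductSpace ℝ E]

theorem inner_sq_div_add_inner_sq_div_le_norm_sq {u v : E} (huv : ⟪u, v⟫ = 0) (w : E) :
    ⟪u, w⟫ ^ 2 / ‖u‖ ^ 2 + ⟪v, w⟫ ^ 2 / ‖v‖ ^ 2 ≤ ‖w‖ ^ 2 := by
  have coeff (e : E) : ⟪e, w⟫ / ‖e‖ ^ 2 * ‖e‖ ^ 2 = ⟪e, w⟫ := by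
    rcases eq_or_ne e 0 with rfl | he
    · simp
    · field_simp
  set a := ⟪u, w⟫ / ‖u‖ ^ 2
  set b := ⟪v, w⟫ / ‖v‖ ^ 2
  have ha : a * ‖u‖ ^ 2 = ⟪u, w⟫ := coeff u
  have hb : b * ‖v‖ ^ 2 = ⟪v, w⟫ := coeff v
  have hproj : ‖a • u + b • v‖ ^ 2 = a * ⟪u, w⟫ + b * ⟪v, w⟫ := by
    rw [norm_add_sq_real, real_inner_smul_left, real_inner_smul_right, huv, norm_smul, norm_smul,
      mul_pow, mul_pow, Real.norm_eq_abs, Real.norm_eq_abs, sq_abs, sq_abs, ← ha, ← hb]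
    ring
  have hpos := sq_nonneg ‖w - (a • u + b • v)‖
  rw [norm_sub_sq_real, hproj, real_inner_comm, inner_add_left, real_inner_smul_left,
    real_inner_smul_left] at hpos
  have hsum : ⟪u, w⟫ ^ 2 / ‖u‖ ^ 2 + ⟪v, w⟫ ^ 2 / ‖v‖ ^ 2 = a * ⟪u, w⟫ + b * ⟪v, w⟫ := by
    simp only [a, b]
    ring
  linarith

variable [CompleteSpace E] {X : Type*} [MeasurableSpace X] {μ : Measure X} {F : X → E}

theorem integral_integral_inner_eq_norm_sq (hF : Integrable F μ) :
    ∫ x, ∫ y, ⟪F x, F y⟫ ∂μ ∂μ = ‖∫ x, F x ∂μ‖ ^ 2 := by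
  calc ∫ x, ∫ y, ⟪F x, F y⟫ ∂μ ∂μ = ∫ x, ⟪∫ y, F y ∂μ, F x⟫ ∂μ := by
        refine integral_congr_ae (Filter.Eventually.of_forall fun x => ?_)
        dsimp only
        rw [integral_inner hF, real_inner_comm]
    _ = ‖∫ x, F x ∂μ‖ ^ 2 := by rw [integral_inner hF, real_inner_self_eq_norm_sq]

theorem inner_integral_of_forall_inner_eq [IsProbabilityMeasure μ] (hF : Integrable F μ) {u : E}
    {c : ℝ} (h : ∀ x, ⟪u, F x⟫ = c) : ⟪u, ∫ x, F x ∂μ⟫ = c := by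
  simp [← integral_inner hF, h]

end InnerProductSpace

theorem integral_integral_mono_of_continuous {X Y : Type*} [TopologicalSpace X]
    [TopologicalSpace Y] [CompactSpace X] [CompactSpace Y] [SecondCountableTopology X]
    [MeasurableSpace X] [MeasurableSpace Y] [OpensMeasurableSpace X] [OpensMeasurableSpace Y]
    (μ : Measure X) (ν : Measure Y) [IsFiniteMeasure μ] [IsFiniteMeasure ν] {f g : X → Y → ℝ}
    (hf : Continuous (Function.uncurry f)) (hg : Continuous (Function.uncurry g))
    (hfg : ∀ x y, f x y ≤ g x y) :
    ∫ x, ∫ y, f x y ∂ν ∂μ ≤ ∫ x, ∫ y, g x y ∂ν ∂μ := by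
  have hfi := hf.integrable_of_hasCompactSupport (μ := μ.prod ν) (.of_compactSpace _)
  have hgi := hg.integrable_of_hasCompactSupport (μ := μ.prod ν) (.of_compactSpace _)
  calc ∫ x, ∫ y, f x y ∂ν ∂μ = ∫ z, Function.uncurry f z ∂(μ.prod ν) :=
        (integral_prod _ hfi).symm
    _ ≤ ∫ z, Function.uncurry g z ∂(μ.prod ν) := integral_mono hfi hgi fun z => hfg z.1 z.2
    _ = ∫ x, ∫ y, g x y ∂ν ∂μ := integral_prod _ hgi

theorem integral_inv_smul_sum_dirac {X : Type*} [MeasurableSpace X] [MeasurableSingletonClass X]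
    {M : ℕ} (φ : Fin M → X) (f : X → ℝ) :
    ∫ x, f x ∂((M : ℝ≥0∞)⁻¹ • ∑ i, Measure.dirac (φ i)) = (M : ℝ)⁻¹ * ∑ i, f (φ i) := by
  rw [integral_smul_measure, integral_finsetSum_measure fun i _ => integrable_dirac (by simp)]
  simp [integral_dirac]

theorem rpow_sub_two_mul_sq_le_abs_rpow {p r s : ℝ} (hp0 : 0 < p) (hp2 : p ≤ 2)
    (hs : |s| ≤ r) : r ^ (p - 2) * s ^ 2 ≤ |s| ^ p := by
  rcases (abs_nonneg s).eq_or_lt with hs0 | hs0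
  · rw [abs_eq_zero.mp hs0.symm]
    simp [Real.zero_rpow hp0.ne']
  · calc r ^ (p - 2) * s ^ 2 ≤ |s| ^ (p - 2) * |s| ^ (2 : ℝ) := by
          rw [Real.rpow_two, sq_abs]
          exact mul_le_mul_of_nonneg_right (Real.rpow_le_rpow_of_nonpos hs0 hs (by linarith))
            (sq_nonneg s)
      _ = |s| ^ p := by rw [← Real.rpow_add hs0]; norm_num

section Sphere

variable {ι : Type*} [Fintype ι]

local notation "𝕊" => Metric.sphere (0 : EuclideanSpace ℝ ι) 1

/-- The energy `I_{α,p}(μ)`. -/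
noncomputable def sphereEnergy (α p : ℝ) (μ : Measure 𝕊) : ℝ :=
  ∫ x, ∫ y, |⟪(x : EuclideanSpace ℝ ι), y⟫ ^ 2 - α| ^ p ∂μ ∂μ

theorem sq_inner_le_one (x y : 𝕊) : ⟪(x : EuclideanSpace ℝ ι), y⟫ ^ 2 ≤ 1 := by
  simpa using sq_le_sq' (neg_le_of_abs_le (abs_real_inner_le_norm (x : EuclideanSpace ℝ ι) y))
    (le_of_abs_le (abs_real_inner_le_norm (x : EuclideanSpace ℝ ι) y))

theorem rpow_sub_two_mul_sphereEnergy_two_le (μ : Measure 𝕊) [IsFiniteMeasure μ] {p α : ℝ}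
    (hp0 : 0 < p) (hp2 : p ≤ 2) (hα : α ≤ 1 / 2) :
    (1 - α) ^ (p - 2) * sphereEnergy α 2 μ ≤ sphereEnergy α p μ := by
  have hinner : Continuous fun z : 𝕊 × 𝕊 => ⟪(z.1 : EuclideanSpace ℝ ι), z.2⟫ := by fun_prop
  simp_rw [sphereEnergy, Real.rpow_two, sq_abs, ← integral_const_mul]
  refine integral_integral_mono_of_continuous μ μ (by fun_prop)
    ((hinner.pow 2 |>.sub continuous_const).abs.rpow_const fun _ => .inr hp0.le) fun x y => ?_
  refine rpow_sub_two_mul_sq_le_abs_rpow hp0 hp2 (abs_le.mpr ⟨?_, ?_⟩) <;>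
    linarith [sq_nonneg ⟪(x : EuclideanSpace ℝ ι), y⟫, sq_inner_le_one x y]

theorem sphereEnergy_two_ge [Nonempty ι] (μ : Measure 𝕊) [IsProbabilityMeasure μ] {α : ℝ}
    (hα : α ≤ (Fintype.card ι : ℝ)⁻¹) :
    (1 - (Fintype.card ι : ℝ)⁻¹) ^ 2 / (((Fintype.card ι : ℝ) ^ 2 + Fintype.card ι) / 2 - 1)
        + ((Fintype.card ι : ℝ)⁻¹ - α) ^ 2
      ≤ sphereEnergy α 2 μ := by
  classical
  set n : ℝ := (Fintype.card ι : ℝ)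
  have hn : 0 < n := by positivity
  have hnorm (x : 𝕊) : ‖(x : EuclideanSpace ℝ ι)‖ = 1 := by simp
  obtain ⟨β, hβ⟩ : ∃ β : ℝ, n * β ^ 2 - 2 * β + α = 0 := by
    have hs := Real.sq_sqrt (show 0 ≤ 1 - n * α by
      nlinarith [mul_le_mul_of_nonneg_left hα hn.le, mul_inv_cancel₀ hn.ne'])
    exact ⟨(1 - √(1 - n * α)) / n, by field_simp; linear_combination hs⟩
  set F : 𝕊 → EuclideanSpace ℝ ((ι × ι) × (ι × ι)) := fun x => outer (shiftedOuter β x)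
  have hF : Integrable F μ :=
    Continuous.integrable_of_hasCompactSupport (by unfold F shiftedOuter; fun_prop)
      (.of_compactSpace _)
  have hkernel (x y : 𝕊) : |⟪(x : EuclideanSpace ℝ ι), y⟫ ^ 2 - α| ^ (2 : ℝ) = ⟪F x, F y⟫ := by
    rw [Real.rpow_two, sq_abs, inner_outer_shiftedOuter_of_norm_eq_one hβ (hnorm x) (hnorm y)]
  have hP : ⟪symTracelessProj ι, ∫ x, F x ∂μ⟫ = 1 - n⁻¹ :=
    inner_integral_of_forall_inner_eq hF fun x => by
      rw [real_inner_comm, inner_outer_shiftedOuter_symTracelessProj, hnorm]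
      ring
  have hI : ⟪outer (idVec ι), ∫ x, F x ∂μ⟫ = 1 - n * α :=
    inner_integral_of_forall_inner_eq hF fun x => inner_outer_idVec_outer_shiftedOuter hβ (hnorm x)
  have horth : ⟪symTracelessProj ι, outer (idVec ι)⟫ = 0 := by
    rw [real_inner_comm, inner_outer_idVec_symTracelessProj]
  calc (1 - n⁻¹) ^ 2 / ((n ^ 2 + n) / 2 - 1) + (n⁻¹ - α) ^ 2
      = (1 - n⁻¹) ^ 2 / ‖symTracelessProj ι‖ ^ 2
          + (1 - n * α) ^ 2 / ‖outer (idVec ι)‖ ^ 2 := by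
        rw [norm_symTracelessProj_sq, norm_outer_sq, norm_idVec_sq]
        field_simp
        simp only [n]
        ring
    _ ≤ ‖∫ x, F x ∂μ‖ ^ 2 := by
        rw [← hP, ← hI]
        exact inner_sq_div_add_inner_sq_div_le_norm_sq horth _
    _ = sphereEnergy α 2 μ := by
        simp_rw [sphereEnergy, hkernel, integral_integral_inner_eq_norm_sq hF]

theorem maximalETF_bound_le_sphereEnergy (μ : Measure 𝕊) [IsProbabilityMeasure μ]
    (hι : 2 ≤ Fintype.card ι) {p : ℝ} (hp0 : 0 < p) (hp2 : p ≤ 2) :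
    2 / ((Fintype.card ι : ℝ) * (Fintype.card ι + 1))
        * (((Fintype.card ι : ℝ) + 1) / (Fintype.card ι + 2)) ^ p
      ≤ sphereEnergy (1 / ((Fintype.card ι : ℝ) + 2)) p μ := by
  have : Nonempty ι := Fintype.card_pos_iff.mp (by omega)
  set n : ℝ := (Fintype.card ι : ℝ)
  have hn : (2 : ℝ) ≤ n := Nat.ofNat_le_cast.mpr hι
  have hr : 1 - 1 / (n + 2) = (n + 1) / (n + 2) := by field_simp; ring
  have hconst : (1 - n⁻¹) ^ 2 / ((n ^ 2 + n) / 2 - 1) + (n⁻¹ - 1 / (n + 2)) ^ 2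
      = 2 / (n * (n + 1)) * ((n + 1) / (n + 2)) ^ 2 := by
    have : n - 1 ≠ 0 := by linarith
    rw [show (n ^ 2 + n) / 2 - 1 = (n - 1) * (n + 2) / 2 by ring]
    field_simp
    ring
  calc 2 / (n * (n + 1)) * ((n + 1) / (n + 2)) ^ p
      = (1 - 1 / (n + 2)) ^ (p - 2)
          * ((1 - n⁻¹) ^ 2 / ((n ^ 2 + n) / 2 - 1) + (n⁻¹ - 1 / (n + 2)) ^ 2) := by
        rw [hconst, hr, Real.rpow_sub (by positivity), Real.rpow_two]
        field_simp
    _ ≤ (1 - 1 / (n + 2)) ^ (p - 2) * sphereEnergy (1 / (n + 2)) 2 μ := by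
        refine mul_le_mul_of_nonneg_left (sphereEnergy_two_ge μ ?_)
          (Real.rpow_nonneg (by rw [hr]; positivity) _)
        rw [one_div]
        exact inv_anti₀ (by positivity) (by linarith)
    _ ≤ sphereEnergy (1 / (n + 2)) p μ :=
        rpow_sub_two_mul_sphereEnergy_two_le μ hp0 hp2
          (one_div_le_one_div_of_le two_pos (by linarith))

theorem sphereEnergy_uniform_of_sq_inner_eq {M : ℕ} (φ : Fin M → 𝕊) {α p : ℝ} (hp : 0 < p)
    (hφ : ∀ i j, i ≠ j → ⟪(φ i : EuclideanSpace ℝ ι), φ j⟫ ^ 2 = α) :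
    sphereEnergy α p ((M : ℝ≥0∞)⁻¹ • ∑ i, Measure.dirac (φ i)) = (M : ℝ)⁻¹ * |1 - α| ^ p := by
  have hrow (i : Fin M) :
      ∑ j, |⟪(φ i : EuclideanSpace ℝ ι), φ j⟫ ^ 2 - α| ^ p = |1 - α| ^ p := by
    rw [Finset.sum_eq_single i (fun j _ hj => by rw [hφ i j hj.symm]; simp [hp.ne'])
      (by simp), real_inner_self_eq_norm_sq]
    simp
  simp_rw [sphereEnergy, integral_inv_smul_sum_dirac, hrow, Finset.sum_const, Finset.card_univ,
    Fintype.card_fin, nsmul_eq_mul]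
  rcases eq_or_ne (M : ℝ) 0 with hM | hM
  · simp [hM]
  · field_simp

end Sphere

/-- For `d ≥ 2` and `p ∈ (0, 2]`, if a maximal real equiangular tight frame
`φ₁, …, φ_M ⊂ S^{d-1}` with `M = d(d+1)/2` and `⟪φᵢ, φⱼ⟫² = 1/(d+2)` for `i ≠ j`
exists, then every Borel probability measure `μ` on `S^{d-1}` satisfies
`∫∫ |⟪x, y⟫² - 1/(d+2)|^p dμ dμ ≥ (2/(d(d+1))) ((d+1)/(d+2))^p`, with equality for the
uniform (counting) probability measure on the points of the maximal ETF. -/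
theorem maximal_etf_minimizes_energy (d : ℕ) (hd : 2 ≤ d) (p : ℝ) (hp0 : 0 < p)
    (hp2 : p ≤ 2)
    (φ : Fin (d * (d + 1) / 2) → Metric.sphere (0 : EuclideanSpace ℝ (Fin d)) 1)
    (hφ : ∀ i j, i ≠ j →
      ⟪(φ i : EuclideanSpace ℝ (Fin d)), (φ j : EuclideanSpace ℝ (Fin d))⟫ ^ 2
        = 1 / ((d : ℝ) + 2)) :
    (∀ μ : Measure (Metric.sphere (0 : EuclideanSpace ℝ (Fin d)) 1),
      IsProbabilityMeasure μ →
      2 / ((d : ℝ) * ((d : ℝ) + 1)) * (((d : ℝ) + 1) / ((d : ℝ) + 2)) ^ p ≤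
        ∫ x, ∫ y,
          |⟪(x : EuclideanSpace ℝ (Fin d)), (y : EuclideanSpace ℝ (Fin d))⟫ ^ 2
            - 1 / ((d : ℝ) + 2)| ^ p ∂μ ∂μ) ∧
    (∫ x, ∫ y,
        |⟪(x : EuclideanSpace ℝ (Fin d)), (y : EuclideanSpace ℝ (Fin d))⟫ ^ 2
          - 1 / ((d : ℝ) + 2)| ^ p
        ∂(((d * (d + 1) / 2 : ℕ) : ℝ≥0∞)⁻¹ • ∑ i, Measure.dirac (φ i))
        ∂(((d * (d + 1) / 2 : ℕ) : ℝ≥0∞)⁻¹ • ∑ i, Measure.dirac (φ i))) =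
      2 / ((d : ℝ) * ((d : ℝ) + 1)) * (((d : ℝ) + 1) / ((d : ℝ) + 2)) ^ p := by
  refine ⟨fun μ _ => by
    simpa [sphereEnergy] using maximalETF_bound_le_sphereEnergy μ (by simpa using hd) hp0 hp2, ?_⟩
  have hM : ((d * (d + 1) / 2 : ℕ) : ℝ) = d * (d + 1) / 2 := by
    rw [Nat.cast_div (Nat.even_mul_succ_self d).two_dvd two_ne_zero]
    push_cast
    ring
  have hr : 1 - 1 / ((d : ℝ) + 2) = (d + 1) / (d + 2) := by field_simp; ring
  rw [← sphereEnergy, sphereEnergy_uniform_of_sq_inner_eq φ hp0 hφ, hM, hr,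
    abs_of_pos (by positivity)]
  field_simp
end

section
/- Let N ≥ d+1 and let A be the N×N Gram matrix of unit vectors x_1, …, x_N in ℝ^d (so A_{ij} = ⟨x_i, x_j⟩ and A_{ii} = 1). Then there exists an index i such that ∑_{j≠i} |A_{ij}| ≥ 1. -/
open RealInnerProductSpace

/-- If `A` is the Gram matrix of `N ≥ d+1` unit vectors in `ℝ^d`, then some row has the
sum of absolute values of its off-diagonal entries at least `1`. -/
theorem gram_row_sum_ge_one (N d : ℕ) (hN : d + 1 ≤ N)
    (x : Fin N → EuclideanSpace ℝ (Fin d)) (hx : ∀ i, ‖x i‖ = 1) :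
    ∃ i : Fin N, 1 ≤ ∑ j, if j = i then 0 else |⟪x i, x j⟫| := by
  have hdep : ¬ LinearIndependent ℝ x := by
    intro h
    have := h.fintype_card_le_finrank
    simp [finrank_euclideanSpace_fin] at this
    omega
  rw [Fintype.not_linearIndependent_iff] at hdep
  obtain ⟨g, hsum, i0, hi0⟩ := hdep
  obtain ⟨i, -, hi⟩ := Finset.exists_max_image Finset.univ (fun j => |g j|)
    ⟨i0, Finset.mem_univ i0⟩
  have hmax : ∀ j, |g j| ≤ |g i| := fun j => hi j (Finset.mem_univ j)
  have hpos : 0 < |g i| := lt_of_lt_of_le (abs_pos.mpr hi0) (hmax i0)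
  have hinner : ∑ j, g j * ⟪x i, x j⟫ = 0 := by
    have h1 : ⟪x i, ∑ j, g j • x j⟫ = ∑ j, g j * ⟪x i, x j⟫ := by
      rw [inner_sum]
      exact Finset.sum_congr rfl fun j _ => real_inner_smul_right _ _ _
    rw [← h1, hsum, inner_zero_right]
  have hii : ⟪x i, x i⟫ = 1 := by
    rw [real_inner_self_eq_norm_sq, hx i]; norm_num
  have hgi : g i = -∑ j, (if j = i then 0 else g j * ⟪x i, x j⟫) := by
    have hsplit : ∑ j, g j * ⟪x i, x j⟫ =
        (∑ j, if j = i then g j * ⟪x i, x j⟫ else 0)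
        + ∑ j, (if j = i then 0 else g j * ⟪x i, x j⟫) := by
      rw [← Finset.sum_add_distrib]
      apply Finset.sum_congr rfl
      intro j _; split <;> ring
    rw [hsplit, Finset.sum_ite_eq' Finset.univ i (fun j => g j * ⟪x i, x j⟫)] at hinner
    simp only [Finset.mem_univ, if_true, hii, mul_one] at hinner
    linarith
  have hb : |g i| ≤ |g i| * ∑ j, (if j = i then 0 else |⟪x i, x j⟫|) := by
    calc |g i| = |∑ j, (if j = i then 0 else g j * ⟪x i, x j⟫)| := by
          rw [hgi, abs_neg]
      _ ≤ ∑ j, |if j = i then 0 else g j * ⟪x i, x j⟫| := Finset.abs_sum_le_sum_abs _ _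
      _ ≤ ∑ j, (if j = i then 0 else |g i| * |⟪x i, x j⟫|) := by
          apply Finset.sum_le_sum
          intro j _
          split
          · simp
          · rw [abs_mul]
            exact mul_le_mul_of_nonneg_right (hmax j) (abs_nonneg _)
      _ = |g i| * ∑ j, (if j = i then 0 else |⟪x i, x j⟫|) := by
          rw [Finset.mul_sum]
          apply Finset.sum_congr rfl
          intro j _; split <;> simp
  exact ⟨i, by nlinarith⟩
end
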